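/- arXiv:2405.05222 — 2 statements merged into one kernel-verified Lean document; each statement's English description precedes it below -/
import Mathlib

section
/- Let (D,F = (f₁,f₂)) be a valid tight pair that is not a hard pair and such that D is biconnected. If the pair does not satisfy property (DS), i.e. there exist a vertex x with N⁻(x) = N⁺(x) and a colour c ∈ {1,2} with f_c⁻(x) ≠ f_c⁺(x), then D is F-dicolourable. -/
/-!
Colour the vertices greedily by decreasing distance to `x`, giving `v` a colour `c` such that fewer
than `f_c⁻(v)` of its already coloured in-neighbours, or fewer than `f_c⁺(v)` of its already
coloured out-neighbours, have colour `c`. In a nonempty monochromatic subdigraph the vertex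
coloured last then has small in- or out-degree. By validity the greedy step only gets stuck at `v`
if all neighbours of `v` are already coloured and every colour `c` occurs exactly `f_c⁻(v)` times
on in-neighbours and `f_c⁺(v)` times on out-neighbours. This is impossible at `v ≠ x`, which has a
neighbour closer to `x`, coloured later; and at `x` it would give `f_c⁻(x) = f_c⁺(x)` since
`N⁻(x) = N⁺(x)`.
-/

open scoped Classical

/-- A finite digraph with vertex set a `Finset ℕ` and no loops.
Both arcs `(u,v)` and `(v,u)` may be present (a digon). -/
structure Digraph' where
  verts : Finset ℕ
  arcs : Finset (ℕ × ℕ)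
  mem_fst : ∀ a ∈ arcs, a.1 ∈ verts
  mem_snd : ∀ a ∈ arcs, a.2 ∈ verts
  no_loops : ∀ a ∈ arcs, a.1 ≠ a.2

namespace Digraph'

/-- In-degree of `v`. -/
def inDeg (D : Digraph') (v : ℕ) : ℕ := (D.arcs.filter fun a => a.2 = v).card

/-- Out-degree of `v`. -/
def outDeg (D : Digraph') (v : ℕ) : ℕ := (D.arcs.filter fun a => a.1 = v).card

/-- In-neighbourhood of `v`. -/
def inNbrs (D : Digraph') (v : ℕ) : Finset ℕ := (D.arcs.filter fun a => a.2 = v).image Prod.fst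

/-- Out-neighbourhood of `v`. -/
def outNbrs (D : Digraph') (v : ℕ) : Finset ℕ := (D.arcs.filter fun a => a.1 = v).image Prod.snd

/-- Neighbourhood of `v` in the underlying graph. -/
def ugNbrs (D : Digraph') (v : ℕ) : Finset ℕ := D.inNbrs v ∪ D.outNbrs v

/-- `H` is a subdigraph of `D`. -/
def IsSubdigraph (H D : Digraph') : Prop := H.verts ⊆ D.verts ∧ H.arcs ⊆ D.arcs

/-- The subdigraph of `D` induced by the vertex set `X`. -/
def induce (D : Digraph') (X : Finset ℕ) : Digraph' where
  verts := D.verts ∩ X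
  arcs := D.arcs.filter fun a => a.1 ∈ X ∧ a.2 ∈ X
  mem_fst := fun a ha => by
    simp only [Finset.mem_filter] at ha
    exact Finset.mem_inter.mpr ⟨D.mem_fst a ha.1, ha.2.1⟩
  mem_snd := fun a ha => by
    simp only [Finset.mem_filter] at ha
    exact Finset.mem_inter.mpr ⟨D.mem_snd a ha.1, ha.2.2⟩
  no_loops := fun a ha => by
    simp only [Finset.mem_filter] at ha
    exact D.no_loops a ha.1

/-- `D − X`, the digraph obtained from `D` by deleting the vertices of `X`. -/
def del (D : Digraph') (X : Finset ℕ) : Digraph' := D.induce (D.verts \ X)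

/-- Adjacency in the underlying graph of `D`. -/
def ugAdj (D : Digraph') (u v : ℕ) : Prop :=
  u ∈ D.verts ∧ v ∈ D.verts ∧ ((u, v) ∈ D.arcs ∨ (v, u) ∈ D.arcs)

/-- `D` is connected, i.e. its underlying graph is connected. -/
def Connected (D : Digraph') : Prop :=
  D.verts.Nonempty ∧ ∀ u ∈ D.verts, ∀ v ∈ D.verts, Relation.ReflTransGen D.ugAdj u v

/-- `D` is biconnected: it has at least two vertices, is connected, and stays
connected after the deletion of any vertex. -/
def Biconnected (D : Digraph') : Prop :=
  2 ≤ D.verts.card ∧ D.Connected ∧ ∀ x ∈ D.verts, (D.del {x}).Connected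

/-- Every arc of `D` lies in a digon. -/
def Bidirected (D : Digraph') : Prop := ∀ a ∈ D.arcs, (a.2, a.1) ∈ D.arcs

/-- The underlying graph of `D` is a cycle. -/
def IsCycleUG (D : Digraph') : Prop :=
  D.Connected ∧ ∀ v ∈ D.verts, (D.ugNbrs v).card = 2

/-- `D` is a bidirected odd cycle. -/
def BidirectedOddCycle (D : Digraph') : Prop :=
  D.Bidirected ∧ D.IsCycleUG ∧ Odd D.verts.card

/-- `D` is a bidirected complete graph. -/
def BidirectedComplete (D : Digraph') : Prop :=
  ∀ u ∈ D.verts, ∀ v ∈ D.verts, u ≠ v → (u, v) ∈ D.arcs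

/-- `D` is strictly-`f`-bidegenerate: every nonempty subdigraph `H` of `D` contains a
vertex `v` with `d⁻_H(v) < f⁻(v)` or `d⁺_H(v) < f⁺(v)`. -/
def StrictlyBidegenerate (D : Digraph') (f : ℕ → ℕ × ℕ) : Prop :=
  ∀ H : Digraph', H.IsSubdigraph D → H.verts.Nonempty →
    ∃ v ∈ H.verts, H.inDeg v < (f v).1 ∨ H.outDeg v < (f v).2

/-- `α` is an `F`-dicolouring of `D`: for each colour `i`, the subdigraph induced by the
vertices coloured `i` is strictly-`Fᵢ`-bidegenerate. -/
def IsDicolouring (D : Digraph') (s : ℕ) (F : Fin s → ℕ → ℕ × ℕ) (α : ℕ → Fin s) : Prop :=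
  ∀ i : Fin s, (D.induce (D.verts.filter fun v => α v = i)).StrictlyBidegenerate (F i)

/-- `D` is `F`-dicolourable. -/
def Dicolourable (D : Digraph') (s : ℕ) (F : Fin s → ℕ → ℕ × ℕ) : Prop :=
  ∃ α : ℕ → Fin s, D.IsDicolouring s F α

/-- `(D,F)` is a valid pair: `D` is connected and the colour budget dominates the
in- and out-degrees at every vertex. -/
def ValidPair (D : Digraph') (s : ℕ) (F : Fin s → ℕ → ℕ × ℕ) : Prop :=
  D.Connected ∧ ∀ v ∈ D.verts,
    D.inDeg v ≤ ∑ i, (F i v).1 ∧ D.outDeg v ≤ ∑ i, (F i v).2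

/-- `(D,F)` is tight: both budget inequalities are equalities at every vertex. -/
def Tight (D : Digraph') (s : ℕ) (F : Fin s → ℕ → ℕ × ℕ) : Prop :=
  ∀ v ∈ D.verts, ∑ i, (F i v).1 = D.inDeg v ∧ ∑ i, (F i v).2 = D.outDeg v

/-- Hard pairs, defined inductively: monochromatic, bicycle, complete, and join hard pairs. -/
inductive IsHardPair : (s : ℕ) → Digraph' → (Fin s → ℕ → ℕ × ℕ) → Prop
  | mono {s : ℕ} {D : Digraph'} {F : Fin s → ℕ → ℕ × ℕ} (i : Fin s)
      (hbi : D.Biconnected)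
      (hi : ∀ v ∈ D.verts, F i v = (D.inDeg v, D.outDeg v))
      (hk : ∀ k : Fin s, k ≠ i → ∀ v ∈ D.verts, F k v = (0, 0)) :
      IsHardPair s D F
  | bicycle {s : ℕ} {D : Digraph'} {F : Fin s → ℕ → ℕ × ℕ} (i j : Fin s) (hij : i ≠ j)
      (hD : D.BidirectedOddCycle)
      (hi : ∀ v ∈ D.verts, F i v = (1, 1))
      (hj : ∀ v ∈ D.verts, F j v = (1, 1))
      (hk : ∀ k : Fin s, k ≠ i → k ≠ j → ∀ v ∈ D.verts, F k v = (0, 0)) :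
      IsHardPair s D F
  | complete {s : ℕ} {D : Digraph'} {F : Fin s → ℕ → ℕ × ℕ}
      (hD : D.BidirectedComplete)
      (hconst : ∀ k : Fin s, ∀ u ∈ D.verts, ∀ v ∈ D.verts, F k u = F k v)
      (hsym : ∀ k : Fin s, ∀ v ∈ D.verts, (F k v).1 = (F k v).2)
      (hsum : ∀ v ∈ D.verts, ∑ k, (F k v).2 = D.verts.card - 1) :
      IsHardPair s D F
  | join {s : ℕ} {D : Digraph'} {F : Fin s → ℕ → ℕ × ℕ}
      (D₁ D₂ : Digraph') (F₁ F₂ : Fin s → ℕ → ℕ × ℕ) (x : ℕ)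
      (h₁ : IsHardPair s D₁ F₁) (h₂ : IsHardPair s D₂ F₂)
      (hx : D₁.verts ∩ D₂.verts = {x})
      (hV : D.verts = D₁.verts ∪ D₂.verts)
      (hA : D.arcs = D₁.arcs ∪ D₂.arcs)
      (hF₁ : ∀ k : Fin s, ∀ v ∈ D₁.verts, v ≠ x → F k v = F₁ k v)
      (hF₂ : ∀ k : Fin s, ∀ v ∈ D₂.verts, v ≠ x → F k v = F₂ k v)
      (hFx : ∀ k : Fin s, F k x = ((F₁ k x).1 + (F₂ k x).1, (F₁ k x).2 + (F₂ k x).2)) :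
      IsHardPair s D F

/-- The sequence of functions of the pair reduced from `(D,F)` by a colouring `α` of
`X ⊆ V(D)`: the budget of colour `i` at `u` decreases by the number of in- and out-neighbours
of `u` inside `X` coloured `i` (truncated at `0`). -/
def reduceF (D : Digraph') {s : ℕ} (F : Fin s → ℕ → ℕ × ℕ) (X : Finset ℕ) (α : ℕ → Fin s) :
    Fin s → ℕ → ℕ × ℕ :=
  fun i u =>
    ((F i u).1 - ((D.inNbrs u ∩ X).filter fun w => α w = i).card,
     (F i u).2 - ((D.outNbrs u ∩ X).filter fun w => α w = i).card)

/-- `B` is a block of `D`: a maximal biconnected subdigraph. -/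
def IsBlock (B D : Digraph') : Prop :=
  B.IsSubdigraph D ∧ B.Biconnected ∧
    ∀ B' : Digraph', B'.IsSubdigraph D → B'.Biconnected → B.IsSubdigraph B' → B' = B

/-- `x` is a cut-vertex of `D`: `D − x` is disconnected. -/
def CutVertex (D : Digraph') (x : ℕ) : Prop :=
  x ∈ D.verts ∧ (D.del {x}).verts.Nonempty ∧ ¬ (D.del {x}).Connected

/-- `B` is an end-block of `D` whose unique cut-vertex (of `D`) in `B` is `x`. -/
def IsEndBlockAt (B D : Digraph') (x : ℕ) : Prop :=
  IsBlock B D ∧ x ∈ B.verts ∧ D.CutVertex x ∧ ∀ y ∈ B.verts, D.CutVertex y → y = x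

/-- `B` is a monochromatic hard end-block with cut-vertex `x`, for colour `c`. -/
def MonoHardEndBlock {s : ℕ} (F : Fin s → ℕ → ℕ × ℕ) (B : Digraph') (x : ℕ) (c : Fin s) : Prop :=
  B.inDeg x ≤ (F c x).1 ∧ B.outDeg x ≤ (F c x).2 ∧
    ∀ v ∈ B.verts, v ≠ x →
      F c v = (B.inDeg v, B.outDeg v) ∧ ∀ k : Fin s, k ≠ c → F k v = (0, 0)

/-- `B` is a bicycle hard end-block with cut-vertex `x`. -/
def BicycleHardEndBlock {s : ℕ} (F : Fin s → ℕ → ℕ × ℕ) (B : Digraph') (x : ℕ) : Prop :=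
  B.BidirectedOddCycle ∧
    ∃ i j : Fin s, i ≠ j ∧
      1 ≤ (F i x).1 ∧ 1 ≤ (F i x).2 ∧ 1 ≤ (F j x).1 ∧ 1 ≤ (F j x).2 ∧
      ∀ v ∈ B.verts, v ≠ x →
        F i v = (1, 1) ∧ F j v = (1, 1) ∧ ∀ k : Fin s, k ≠ i → k ≠ j → F k v = (0, 0)

/-- `B` is a complete hard end-block with cut-vertex `x`. -/
def CompleteHardEndBlock {s : ℕ} (F : Fin s → ℕ → ℕ × ℕ) (B : Digraph') (x : ℕ) : Prop :=
  B.BidirectedComplete ∧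
    (∀ k : Fin s, ∀ u ∈ B.verts, u ≠ x → ∀ v ∈ B.verts, v ≠ x → F k u = F k v) ∧
    (∀ k : Fin s, ∀ v ∈ B.verts, v ≠ x → (F k v).1 = (F k v).2) ∧
    (∀ k : Fin s, ∀ u ∈ B.verts, u ≠ x → (F k u).1 ≤ (F k x).1 ∧ (F k u).2 ≤ (F k x).2)

/-- `B` is a hard end-block with cut-vertex `x`. -/
def HardEndBlock {s : ℕ} (F : Fin s → ℕ → ℕ × ℕ) (B : Digraph') (x : ℕ) : Prop :=
  (∃ c : Fin s, MonoHardEndBlock F B x c) ∨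
    BicycleHardEndBlock F B x ∨ CompleteHardEndBlock F B x

/-- `(D',F')` is the contraction of `(D,F)` with respect to the hard end-block `B` with
cut-vertex `x`, where `u` is a vertex of `B` other than `x`. -/
def IsContraction (D : Digraph') {s : ℕ} (F : Fin s → ℕ → ℕ × ℕ) (B : Digraph') (x u : ℕ)
    (D' : Digraph') (F' : Fin s → ℕ → ℕ × ℕ) : Prop :=
  D' = D.del (B.verts \ {x}) ∧
  (∀ k : Fin s, ∀ v ∈ D'.verts, v ≠ x → F' k v = F k v) ∧
  ((∃ c : Fin s, MonoHardEndBlock F B x c ∧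
      F' c x = ((F c x).1 - B.inDeg x, (F c x).2 - B.outDeg x) ∧
      ∀ k : Fin s, k ≠ c → F' k x = F k x) ∨
   ((¬ ∃ c : Fin s, MonoHardEndBlock F B x c) ∧
      ∀ k : Fin s, F' k x = ((F k x).1 - (F k u).1, (F k x).2 - (F k u).2)))

/-- Property (E): all the functions exceed `1` in the relevant coordinate at every vertex
having an in-(resp. out-)neighbour. -/
def PropE (D : Digraph') {s : ℕ} (F : Fin s → ℕ → ℕ × ℕ) : Prop :=
  ∀ x ∈ D.verts, ∀ c : Fin s,
    (0 < D.inDeg x → 1 ≤ (F c x).1) ∧ (0 < D.outDeg x → 1 ≤ (F c x).2)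

/-- `C` is a directed cycle: connected, and every vertex has in- and out-degree one. -/
def IsDirectedCycle (C : Digraph') : Prop :=
  C.Connected ∧ ∀ v ∈ C.verts, C.inDeg v = 1 ∧ C.outDeg v = 1

/-- `D` is acyclic: it contains no directed cycle. -/
def AcyclicD (D : Digraph') : Prop :=
  ¬ ∃ C : Digraph', C.IsSubdigraph D ∧ C.IsDirectedCycle

/-- `α` is a `k`-dicolouring of `D`: every colour class induces an acyclic subdigraph. -/
def IsKDicolouring (D : Digraph') (k : ℕ) (α : ℕ → Fin k) : Prop :=
  ∀ i : Fin k, AcyclicD (D.induce (D.verts.filter fun v => α v = i))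

/-- The dichromatic number of `D`. -/
noncomputable def dichromatic (D : Digraph') : ℕ :=
  sInf {k : ℕ | ∃ α : ℕ → Fin k, D.IsKDicolouring k α}

end Digraph'

open Digraph'

open Finset

theorem SimpleGraph.Reachable.exists_adj_dist_lt {V : Type*} {G : SimpleGraph V} {u v : V}
    (h : G.Reachable u v) (hne : u ≠ v) : ∃ w, G.Adj u w ∧ G.dist w v < G.dist u v := by
  obtain ⟨p, hp⟩ := h.exists_walk_length_eq_dist
  cases p with
  | nil => exact absurd rfl hne
  | cons hadj q => exact ⟨_, hadj, (SimpleGraph.dist_le q).trans_lt (by simp [← hp])⟩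

theorem Finset.subset_and_card_filter_eq_of_card_le_sum {σ ι : Type*} [DecidableEq σ] [Fintype ι]
    [DecidableEq ι] {N P : Finset σ} {α : σ → ι} {b : ι → ℕ} (hN : #N ≤ ∑ c, b c)
    (h : ∀ c, b c ≤ #{w ∈ N ∩ P | α w = c}) :
    N ⊆ P ∧ ∀ c, #{w ∈ N ∩ P | α w = c} = b c := by
  have hfibres : ∑ c, #{w ∈ N ∩ P | α w = c} = #(N ∩ P) :=
    (card_eq_sum_card_fiberwise fun _ _ => mem_univ _).symm
  have hinter : #(N ∩ P) ≤ #N := card_le_card inter_subset_left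
  have hbudget : ∑ c, b c ≤ ∑ c, #{w ∈ N ∩ P | α w = c} := sum_le_sum fun c _ => h c
  refine ⟨inter_eq_left.mp (eq_of_subset_of_card_le inter_subset_left (by omega)), fun c => ?_⟩
  exact ((sum_eq_sum_iff_of_le fun c _ => h c).mp (by omega) c (mem_univ c)).symm

namespace Digraph'

variable {D H : Digraph'} {s : ℕ} {F : Fin s → ℕ → ℕ × ℕ} {P Q : Finset ℕ} {α β : ℕ → Fin s}
  {u v w : ℕ} {c : Fin s}

lemma mem_inNbrs : w ∈ D.inNbrs v ↔ (w, v) ∈ D.arcs := by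
  simp [inNbrs]

lemma mem_outNbrs : w ∈ D.outNbrs v ↔ (v, w) ∈ D.arcs := by
  simp [outNbrs]

lemma card_inNbrs (D : Digraph') (v : ℕ) : #(D.inNbrs v) = D.inDeg v :=
  card_image_of_injOn fun a ha b hb hab => Prod.ext hab <| by
    simp only [coe_filter] at ha hb
    exact ha.2.trans hb.2.symm

lemma card_outNbrs (D : Digraph') (v : ℕ) : #(D.outNbrs v) = D.outDeg v :=
  card_image_of_injOn fun a ha b hb hab => Prod.ext (by
    simp only [coe_filter] at ha hb
    exact ha.2.trans hb.2.symm) hab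

lemma inNbrs_subset_erase (D : Digraph') (v : ℕ) : D.inNbrs v ⊆ D.verts.erase v := fun _ hw =>
  have harc := mem_inNbrs.mp hw
  mem_erase.mpr ⟨D.no_loops _ harc, D.mem_fst _ harc⟩

lemma outNbrs_subset_erase (D : Digraph') (v : ℕ) : D.outNbrs v ⊆ D.verts.erase v := fun _ hw =>
  have harc := mem_outNbrs.mp hw
  mem_erase.mpr ⟨(D.no_loops _ harc).symm, D.mem_snd _ harc⟩

lemma IsSubdigraph.trans (hHD : H.IsSubdigraph D) {E : Digraph'} (hDE : D.IsSubdigraph E) :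
    H.IsSubdigraph E :=
  ⟨hHD.1.trans hDE.1, hHD.2.trans hDE.2⟩

lemma induce_isSubdigraph (D : Digraph') (X : Finset ℕ) : (D.induce X).IsSubdigraph D :=
  ⟨inter_subset_left, filter_subset _ _⟩

lemma IsSubdigraph.inNbrs_subset (h : H.IsSubdigraph D) (v : ℕ) :
    H.inNbrs v ⊆ D.inNbrs v ∩ H.verts.erase v := fun _ hw =>
  mem_inter.mpr ⟨mem_inNbrs.mpr (h.2 (mem_inNbrs.mp hw)), H.inNbrs_subset_erase v hw⟩

lemma IsSubdigraph.outNbrs_subset (h : H.IsSubdigraph D) (v : ℕ) :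
    H.outNbrs v ⊆ D.outNbrs v ∩ H.verts.erase v := fun _ hw =>
  mem_inter.mpr ⟨mem_outNbrs.mpr (h.2 (mem_outNbrs.mp hw)), H.outNbrs_subset_erase v hw⟩

def ColourAvailable (D : Digraph') (F : Fin s → ℕ → ℕ × ℕ) (P : Finset ℕ) (α : ℕ → Fin s)
    (v : ℕ) (c : Fin s) : Prop :=
  #{w ∈ D.inNbrs v ∩ P | α w = c} < (F c v).1 ∨ #{w ∈ D.outNbrs v ∩ P | α w = c} < (F c v).2

lemma ColourAvailable.mono (h : D.ColourAvailable F Q α v c) (hPQ : P ⊆ Q) :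
    D.ColourAvailable F P α v c := by
  have hcount (N : Finset ℕ) : #{w ∈ N ∩ P | α w = c} ≤ #{w ∈ N ∩ Q | α w = c} :=
    card_le_card (filter_subset_filter _ (inter_subset_inter_left hPQ))
  exact h.imp (lt_of_le_of_lt (hcount _)) (lt_of_le_of_lt (hcount _))

lemma colourAvailable_congr (h : ∀ w ∈ P, α w = β w) :
    D.ColourAvailable F P α v c ↔ D.ColourAvailable F P β v c := by
  have hfilter (N : Finset ℕ) : {w ∈ N ∩ P | α w = c} = {w ∈ N ∩ P | β w = c} :=
    filter_congr fun w hw => by rw [h w (mem_inter.mp hw).2]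
  rw [ColourAvailable, ColourAvailable, hfilter, hfilter]

lemma nbrs_subset_of_forall_not_colourAvailable (hin : D.inDeg v ≤ ∑ c, (F c v).1)
    (hout : D.outDeg v ≤ ∑ c, (F c v).2) (h : ∀ c, ¬ D.ColourAvailable F P α v c) :
    (D.inNbrs v ⊆ P ∧ ∀ c, #{w ∈ D.inNbrs v ∩ P | α w = c} = (F c v).1) ∧
      (D.outNbrs v ⊆ P ∧ ∀ c, #{w ∈ D.outNbrs v ∩ P | α w = c} = (F c v).2) := by
  simp only [ColourAvailable, not_or, not_lt] at h
  exact ⟨subset_and_card_filter_eq_of_card_le_sum (D.card_inNbrs v ▸ hin) fun c => (h c).1,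
    subset_and_card_filter_eq_of_card_le_sum (D.card_outNbrs v ▸ hout) fun c => (h c).2⟩

section Greedy

/- Vertices are coloured in decreasing order of the key `κ`, so `{w ∈ D.verts | κ v < κ w}` is the
set of vertices coloured before `v`. -/
variable {γ : Type*} [LinearOrder γ] (κ : ℕ → γ)

theorem exists_forall_colourAvailable [NeZero s] (hκ : Function.Injective κ)
    (h : ∀ v ∈ D.verts, ∀ α : ℕ → Fin s, ∃ c, D.ColourAvailable F {w ∈ D.verts | κ v < κ w} α v c) :
    ∃ α : ℕ → Fin s, ∀ v ∈ D.verts, D.ColourAvailable F {w ∈ D.verts | κ v < κ w} α v (α v) := by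
  suffices ∀ t ⊆ D.verts, ∃ α : ℕ → Fin s,
      ∀ v ∈ t, D.ColourAvailable F {w ∈ t | κ v < κ w} α v (α v) from this _ subset_rfl
  intro t
  induction t using Finset.induction_on_min_value κ with
  | empty => exact fun _ => ⟨fun _ => 0, by simp⟩
  | insert a t ha hmin ih =>
    intro hsub
    obtain ⟨α, hα⟩ := ih ((subset_insert a t).trans hsub)
    obtain ⟨c, hc⟩ := h a (hsub (mem_insert_self a t)) α
    have hne : ∀ w ∈ t, w ≠ a := fun w hw => ne_of_mem_of_not_mem hw ha
    have hlt : ∀ w ∈ t, κ a < κ w := fun w hw => (hmin w hw).lt_of_ne (hκ.ne (hne w hw).symm)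
    have hagree : ∀ w ∈ t, Function.update α a c w = α w :=
      fun w hw => Function.update_of_ne (hne w hw) _ _
    refine ⟨Function.update α a c, fun v hv => ?_⟩
    rcases mem_insert.mp hv with rfl | hv
    · have hpred : {w ∈ insert v t | κ v < κ w} = t := by
        rw [filter_insert, if_neg (lt_irrefl _), filter_true_of_mem hlt]
      rw [hpred, Function.update_self, colourAvailable_congr hagree]
      exact hc.mono fun w hw => mem_filter.mpr ⟨hsub (mem_insert_of_mem hw), hlt w hw⟩
    · have hpred : {w ∈ insert a t | κ v < κ w} = {w ∈ t | κ v < κ w} := by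
        rw [filter_insert, if_neg (hlt v hv).asymm]
      rw [hpred, hagree v hv, colourAvailable_congr fun w hw => hagree w (mem_filter.mp hw).1]
      exact hα v hv

theorem isDicolouring_of_forall_colourAvailable (hκ : Set.InjOn κ D.verts)
    (hα : ∀ v ∈ D.verts, D.ColourAvailable F {w ∈ D.verts | κ v < κ w} α v (α v)) :
    D.IsDicolouring s F α := by
  intro i H hH hne
  have hHD : H.IsSubdigraph D := hH.trans (D.induce_isSubdigraph _)
  obtain ⟨v, hv, hmin⟩ := exists_min_image H.verts κ hne
  have hclass : ∀ w ∈ H.verts, α w = i := fun w hw => by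
    have := hH.1 hw
    simp only [induce, mem_inter, mem_filter] at this
    exact this.2.2
  have hearlier : H.verts.erase v ⊆ {w ∈ D.verts | κ v < κ w} := fun w hw => by
    obtain ⟨hwv, hw⟩ := mem_erase.mp hw
    exact mem_filter.mpr ⟨hHD.1 hw,
      (hmin w hw).lt_of_ne (hκ.ne (hHD.1 hv) (hHD.1 hw) hwv.symm)⟩
  have hcount (N : Finset ℕ) :
      #(N ∩ H.verts.erase v) ≤ #{w ∈ N ∩ {w ∈ D.verts | κ v < κ w} | α w = α v} := by
    refine card_le_card fun w hw => ?_
    obtain ⟨hwN, hw⟩ := mem_inter.mp hw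
    rw [hclass v hv, mem_filter, mem_inter]
    exact ⟨⟨hwN, hearlier hw⟩, hclass w (mem_of_mem_erase hw)⟩
  refine ⟨v, hv, ?_⟩
  rw [← card_inNbrs, ← card_outNbrs, ← hclass v hv]
  exact (hα v (hHD.1 hv)).imp
    (lt_of_le_of_lt ((card_le_card (hHD.inNbrs_subset v)).trans (hcount _)))
    (lt_of_le_of_lt ((card_le_card (hHD.outNbrs_subset v)).trans (hcount _)))

end Greedy

def underlying (D : Digraph') : SimpleGraph ℕ := SimpleGraph.fromRel D.ugAdj

lemma Connected.underlying_reachable (hD : D.Connected) (hu : u ∈ D.verts) (hv : v ∈ D.verts) :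
    D.underlying.Reachable u v := by
  rw [SimpleGraph.reachable_iff_reflTransGen]
  refine Relation.ReflTransGen.mono (fun a b (hab : D.ugAdj a b) => ⟨?_, Or.inl hab⟩) _ _
    (hD.2 u hu v hv)
  rcases hab.2.2 with harc | harc
  · exact D.no_loops _ harc
  · exact (D.no_loops _ harc).symm

lemma mem_ugNbrs_of_underlying_adj (h : D.underlying.Adj v w) : w ∈ D.ugNbrs v := by
  obtain ⟨-, hvw | hwv⟩ := h
  · rcases hvw.2.2 with harc | harc
    · exact mem_union_right _ (mem_outNbrs.mpr harc)
    · exact mem_union_left _ (mem_inNbrs.mpr harc)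
  · rcases hwv.2.2 with harc | harc
    · exact mem_union_left _ (mem_inNbrs.mpr harc)
    · exact mem_union_right _ (mem_outNbrs.mpr harc)

theorem dicolourable_of_inNbrs_eq_outNbrs (hvalid : D.ValidPair s F) {x : ℕ} (hx : x ∈ D.verts)
    (hN : D.inNbrs x = D.outNbrs x) (hc : (F c x).1 ≠ (F c x).2) : D.Dicolourable s F := by
  have : NeZero s := NeZero.of_pos c.pos
  let κ : ℕ → ℕ ×ₗ ℕ := fun v => toLex (D.underlying.dist v x, v)
  have hκ : Function.Injective κ := fun u v h => congrArg Prod.snd (toLex.injective h)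
  have hfree : ∀ v ∈ D.verts, ∀ α : ℕ → Fin s,
      ∃ c, D.ColourAvailable F {w ∈ D.verts | κ v < κ w} α v c := by
    intro v hv α
    by_contra! hblocked
    obtain ⟨⟨hin, hcin⟩, hout, hcout⟩ :=
      nbrs_subset_of_forall_not_colourAvailable (hvalid.2 v hv).1 (hvalid.2 v hv).2 hblocked
    by_cases hvx : v = x
    · subst hvx
      exact hc ((hcin c).symm.trans (hN ▸ hcout c))
    · obtain ⟨w, hadj, hcloser⟩ := (hvalid.1.underlying_reachable hv hx).exists_adj_dist_lt hvx
      have hlater := (mem_filter.mp (union_subset hin hout (mem_ugNbrs_of_underlying_adj hadj))).2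
      simp only [κ, Prod.Lex.toLex_lt_toLex] at hlater
      omega
  obtain ⟨α, hα⟩ := exists_forall_colourAvailable κ hκ hfree
  exact ⟨α, isDicolouring_of_forall_colourAvailable κ hκ.injOn hα⟩

end Digraph'

theorem not_propDS_dicolourable_general
    (D : Digraph') (F : Fin 2 → ℕ → ℕ × ℕ)
    (hvalid : D.ValidPair 2 F)
    (hDS : ∃ x ∈ D.verts, D.inNbrs x = D.outNbrs x ∧
      ∃ c : Fin 2, (F c x).1 ≠ (F c x).2) :
    D.Dicolourable 2 F := by
  obtain ⟨x, hx, hN, c, hc⟩ := hDS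
  exact dicolourable_of_inNbrs_eq_outNbrs hvalid hx hN hc

/-- **Lemma.** Let `(D,F=(f₁,f₂))` be a valid tight non-hard pair with `D` biconnected.
If the pair does not satisfy property (DS), i.e. there exist a vertex `x` with
`N⁻(x) = N⁺(x)` and a colour `c` with `f_c⁻(x) ≠ f_c⁺(x)`, then `D` is `F`-dicolourable. -/
theorem not_propDS_dicolourable
    (D : Digraph') (F : Fin 2 → ℕ → ℕ × ℕ)
    (hvalid : D.ValidPair 2 F) (htight : D.Tight 2 F)
    (hnothard : ¬ IsHardPair 2 D F) (hbi : D.Biconnected)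
    (hDS : ∃ x ∈ D.verts, D.inNbrs x = D.outNbrs x ∧
      ∃ c : Fin 2, (F c x).1 ≠ (F c x).2) :
    D.Dicolourable 2 F :=
  not_propDS_dicolourable_general D F hvalid hDS
end

section
/- Let (D,F = (f₁,f₂)) be a valid tight pair that is not a hard pair and such that D is a bidirected complete graph. Then D is F-dicolourable. -/
open scoped Classical

open Digraph'

/-!
In a bidirected complete graph on `n` vertices, a set `C` of vertices induces a strictly
`f`-bidegenerate subdigraph as soon as every nonempty `S ⊆ C` contains a vertex `v` with
`|S| ≤ max (f⁻ v) (f⁺ v)`, because degrees inside `S` are at most `|S| - 1`. With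
`gᵢ = max fᵢ⁻ fᵢ⁺`, tightness gives `g₁ v + g₂ v ≥ n - 1`, and it suffices to split `V` into a
`g₁`-admissible and a `g₂`-admissible part. Take `X` a largest `g₁`-admissible set. If `V \ X`
is not `g₂`-admissible, counting forces `g₁ v = |X|` and `g₂ v = n - 1 - |X|` outside `X`.
Exchanging any `u ∈ X` against such a vertex gives another largest admissible set, so the same
holds at `u`: `g₁, g₂` are constant with sum `n - 1`, and tightness then makes `(D, F)` a
complete hard pair.
-/

namespace Finset

variable {α : Type*}

/-- Counting form of "every nonempty `S ⊆ X` has a vertex `v` with `#S ≤ g v`", i.e. of strict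
`g`-degeneracy of the complete graph on `X`. -/
def Admissible (g : α → ℕ) (X : Finset α) : Prop :=
  ∀ t, #{v ∈ X | g v ≤ t} ≤ t

variable {g g₁ g₂ : α → ℕ} {V X Y : Finset α}

theorem admissible_empty (g : α → ℕ) : Admissible g (∅ : Finset α) := by
  simp [Admissible]

theorem Admissible.mono (hX : Admissible g X) (hYX : Y ⊆ X) : Admissible g Y :=
  fun t => (card_le_card (filter_subset_filter _ hYX)).trans (hX t)

theorem Admissible.exists_card_le (hX : Admissible g X) (hSX : Y ⊆ X) (hY : Y.Nonempty) :
    ∃ v ∈ Y, #Y ≤ g v := by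
  by_contra! hsmall
  have hsub : Y ⊆ {v ∈ X | g v ≤ #Y - 1} := fun v hv =>
    mem_filter.mpr ⟨hSX hv, by have := hsmall v hv; omega⟩
  have := (card_le_card hsub).trans (hX (#Y - 1))
  have := hY.card_pos
  omega

variable [DecidableEq α]

theorem Admissible.insert_of_card_lt (hX : Admissible g X) {v : α} (hv : #X < g v) :
    Admissible g (insert v X) := by
  intro t
  rw [filter_insert]
  split_ifs with hvt
  · calc #(insert v {u ∈ X | g u ≤ t}) ≤ #{u ∈ X | g u ≤ t} + 1 := card_insert_le _ _
      _ ≤ #X + 1 := Nat.add_le_add_right (card_le_card (filter_subset _ _)) 1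
      _ ≤ t := hv.trans_le hvt
  · exact hX t

theorem Admissible.exchange (hX : Admissible g X) {u v : α} (hu : u ∈ X) (hv : v ∉ X)
    (hgv : #X ≤ g v) :
    Admissible g (insert v (X.erase u)) ∧ #(insert v (X.erase u)) = #X := by
  have hcard : #(X.erase u) + 1 = #X := card_erase_add_one hu
  refine ⟨(hX.mono (erase_subset u X)).insert_of_card_lt (by omega), ?_⟩
  rw [card_insert_of_notMem fun h => hv (mem_of_mem_erase h)]
  exact hcard

theorem Admissible.eq_on_sdiff_of_maximal (hY : Admissible g₁ Y)
    (hsum : ∀ v ∈ V, #V ≤ g₁ v + g₂ v + 1) (hYV : Y ⊆ V) (hmax : ∀ Z ⊆ V, Admissible g₁ Z → #Z ≤ #Y)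
    (hcompl : ¬ Admissible g₂ (V \ Y)) :
    ∀ v ∈ V \ Y, g₁ v = #Y ∧ g₂ v + #Y + 1 = #V := by
  have hg₁ : ∀ v ∈ V \ Y, g₁ v ≤ #Y := fun v hv => by
    obtain ⟨hvV, hvY⟩ := mem_sdiff.mp hv
    by_contra! hlt
    have := hmax _ (insert_subset hvV hYV) (hY.insert_of_card_lt hlt)
    rw [card_insert_of_notMem hvY] at this
    omega
  obtain ⟨t, ht⟩ : ∃ t, t < #{v ∈ V \ Y | g₂ v ≤ t} := by
    simpa [Admissible] using hcompl
  set W := {v ∈ V \ Y | g₂ v ≤ t}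
  have hcardW : #W ≤ #V - #Y := (card_le_card (filter_subset _ _)).trans_eq
    (card_sdiff_of_subset hYV)
  obtain ⟨w, hw⟩ : W.Nonempty := card_pos.mp (by omega)
  obtain ⟨hwVY, hg₂w⟩ := mem_filter.mp hw
  have hbudget := hsum w (mem_sdiff.mp hwVY).1
  have hYcard := card_le_card hYV
  have hg₁w := hg₁ w hwVY
  -- `w` forces `t + 1 ≥ #V - #Y`, so the level `t` of `g₂` contains all of `V \ Y`.
  have hWeq : W = V \ Y :=
    eq_of_subset_of_card_le (filter_subset _ _) (by rw [card_sdiff_of_subset hYV]; omega)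
  intro v hv
  have hg₂v : g₂ v ≤ t := (mem_filter.mp (hWeq ▸ hv : v ∈ W)).2
  have hbudget := hsum v (mem_sdiff.mp hv).1
  have hg₁v := hg₁ v hv
  omega

theorem exists_admissible_partition (hsum : ∀ v ∈ V, #V ≤ g₁ v + g₂ v + 1)
    (hnotconst : ¬ ∃ c, ∀ v ∈ V, g₁ v = c ∧ g₂ v + c + 1 = #V) :
    ∃ X ⊆ V, Admissible g₁ X ∧ Admissible g₂ (V \ X) := by
  obtain ⟨X, hXmem, hmax⟩ := exists_max_image {X ∈ V.powerset | Admissible g₁ X} card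
    ⟨∅, mem_filter.mpr ⟨empty_mem_powerset V, admissible_empty g₁⟩⟩
  obtain ⟨hXV, hX⟩ : X ⊆ V ∧ Admissible g₁ X := mem_filter.mp hXmem |>.imp_left mem_powerset.mp
  have hmax' : ∀ Z ⊆ V, Admissible g₁ Z → #Z ≤ #X := fun Z hZV hZ =>
    hmax Z (mem_filter.mpr ⟨mem_powerset.mpr hZV, hZ⟩)
  by_contra! hnone
  have hout := hX.eq_on_sdiff_of_maximal hsum hXV hmax' (hnone X hXV hX)
  obtain ⟨w, hw⟩ : (V \ X).Nonempty := nonempty_iff_ne_empty.mpr fun h =>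
    hnone X hXV hX (h ▸ admissible_empty g₂)
  obtain ⟨hwV, hwX⟩ := mem_sdiff.mp hw
  refine hnotconst ⟨#X, fun v hv => ?_⟩
  by_cases hvX : v ∈ X
  · obtain ⟨hX', hcard⟩ := hX.exchange hvX hwX (hout w hw).1.ge
    have hX'V : insert w (X.erase v) ⊆ V := insert_subset hwV ((erase_subset v X).trans hXV)
    rw [← hcard]
    refine hX'.eq_on_sdiff_of_maximal hsum hX'V (hcard ▸ hmax') (hnone _ hX'V hX') v ?_
    simp [hv, ne_of_mem_of_not_mem hvX hwX]
  · exact hout v (mem_sdiff.mpr ⟨hv, hvX⟩)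

end Finset

namespace Digraph'

open Finset

variable {D : Digraph'} {v : ℕ}

theorem inArcs_subset (D : Digraph') (v : ℕ) :
    D.arcs.filter (fun a => a.2 = v) ⊆ D.verts.erase v ×ˢ {v} := by
  intro a ha
  obtain ⟨haD, rfl⟩ := mem_filter.mp ha
  exact mem_product.mpr ⟨mem_erase.mpr ⟨D.no_loops a haD, D.mem_fst a haD⟩, mem_singleton_self _⟩

theorem outArcs_subset (D : Digraph') (v : ℕ) :
    D.arcs.filter (fun a => a.1 = v) ⊆ {v} ×ˢ D.verts.erase v := by
  intro a ha
  obtain ⟨haD, rfl⟩ := mem_filter.mp ha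
  exact mem_product.mpr
    ⟨mem_singleton_self _, mem_erase.mpr ⟨(D.no_loops a haD).symm, D.mem_snd a haD⟩⟩

theorem inDeg_lt_card (hv : v ∈ D.verts) : D.inDeg v < #D.verts := by
  have := card_le_card (D.inArcs_subset v)
  rw [card_product, card_singleton, mul_one, card_erase_of_mem hv] at this
  have := card_pos.mpr ⟨v, hv⟩
  unfold inDeg
  omega

theorem outDeg_lt_card (hv : v ∈ D.verts) : D.outDeg v < #D.verts := by
  have := card_le_card (D.outArcs_subset v)
  rw [card_product, card_singleton, one_mul, card_erase_of_mem hv] at this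
  have := card_pos.mpr ⟨v, hv⟩
  unfold outDeg
  omega

theorem BidirectedComplete.inDeg_eq (hD : D.BidirectedComplete) (hv : v ∈ D.verts) :
    D.inDeg v = #D.verts - 1 := by
  refine (congrArg card ((D.inArcs_subset v).antisymm ?_)).trans ?_
  · rintro ⟨u, w⟩ ha
    simp only [mem_product, mem_erase, mem_singleton] at ha
    obtain ⟨⟨hne, huV⟩, rfl⟩ := ha
    exact mem_filter.mpr ⟨hD u huV w hv hne, rfl⟩
  · rw [card_product, card_singleton, mul_one, card_erase_of_mem hv]

theorem BidirectedComplete.outDeg_eq (hD : D.BidirectedComplete) (hv : v ∈ D.verts) :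
    D.outDeg v = #D.verts - 1 := by
  refine (congrArg card ((D.outArcs_subset v).antisymm ?_)).trans ?_
  · rintro ⟨u, w⟩ ha
    simp only [mem_product, mem_erase, mem_singleton] at ha
    obtain ⟨rfl, hne, hwV⟩ := ha
    exact mem_filter.mpr ⟨hD u hv w hwV hne.symm, rfl⟩
  · rw [card_product, card_singleton, one_mul, card_erase_of_mem hv]

theorem strictlyBidegenerate_of_admissible {H : Digraph'} {f : ℕ → ℕ × ℕ}
    (hH : Admissible (fun v => max (f v).1 (f v).2) H.verts) : H.StrictlyBidegenerate f := by
  intro K hK hne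
  obtain ⟨v, hv, hcard⟩ := hH.exists_card_le hK.1 hne
  refine ⟨v, hv, ?_⟩
  rcases le_max_iff.mp hcard with h | h
  exacts [Or.inl ((inDeg_lt_card hv).trans_le h), Or.inr ((outDeg_lt_card hv).trans_le h)]

theorem dicolourable_two_of_admissible {F : Fin 2 → ℕ → ℕ × ℕ} {X : Finset ℕ}
    (h₀ : Admissible (fun v => max (F 0 v).1 (F 0 v).2) X)
    (h₁ : Admissible (fun v => max (F 1 v).1 (F 1 v).2) (D.verts \ X)) :
    D.Dicolourable 2 F := by
  refine ⟨fun v => if v ∈ X then 0 else 1, Fin.forall_fin_two.mpr ⟨?_, ?_⟩⟩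
  · refine strictlyBidegenerate_of_admissible (h₀.mono fun v hv => ?_)
    exact (by simpa [induce] using hv : v ∈ D.verts ∧ v ∈ X).2
  · refine strictlyBidegenerate_of_admissible (h₁.mono fun v hv => ?_)
    simpa [induce] using hv

variable {F : Fin 2 → ℕ → ℕ × ℕ}

theorem Tight.add_eq_card_sub_one (htight : D.Tight 2 F) (hD : D.BidirectedComplete)
    (hv : v ∈ D.verts) :
    (F 0 v).1 + (F 1 v).1 = #D.verts - 1 ∧ (F 0 v).2 + (F 1 v).2 = #D.verts - 1 := by
  simpa [Fin.sum_univ_two, hD.inDeg_eq hv, hD.outDeg_eq hv] using htight v hv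

theorem isHardPair_of_max_eq (hD : D.BidirectedComplete) (htight : D.Tight 2 F) {c : ℕ}
    (hc : ∀ v ∈ D.verts,
      max (F 0 v).1 (F 0 v).2 = c ∧ max (F 1 v).1 (F 1 v).2 + c + 1 = #D.verts) :
    IsHardPair 2 D F := by
  have hF : ∀ v ∈ D.verts, F 0 v = (c, c) ∧ F 1 v = (#D.verts - 1 - c, #D.verts - 1 - c) := by
    intro v hv
    have := htight.add_eq_card_sub_one hD hv
    have := hc v hv
    constructor <;> ext <;> simp only <;> omega
  refine IsHardPair.complete hD (fun k u hu v hv => ?_) (fun k v hv => ?_) (fun v hv => ?_)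
  · fin_cases k
    exacts [(hF u hu).1.trans (hF v hv).1.symm, (hF u hu).2.trans (hF v hv).2.symm]
  · fin_cases k <;> simp [hF v hv]
  · have := (hc v hv).2
    simp only [Fin.sum_univ_two, hF v hv]
    omega

end Digraph'

theorem bidirectedComplete_dicolourable_general
    (D : Digraph') (F : Fin 2 → ℕ → ℕ × ℕ)
    (htight : D.Tight 2 F)
    (hnothard : ¬ IsHardPair 2 D F)
    (hcomp : D.BidirectedComplete) :
    D.Dicolourable 2 F := by
  have hbudget : ∀ v ∈ D.verts,
      D.verts.card ≤ max (F 0 v).1 (F 0 v).2 + max (F 1 v).1 (F 1 v).2 + 1 := fun v hv => by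
    have := htight.add_eq_card_sub_one hcomp hv
    have := Finset.card_pos.mpr ⟨v, hv⟩
    omega
  obtain ⟨X, -, h₀, h₁⟩ := Finset.exists_admissible_partition hbudget
    fun ⟨_, hc⟩ => hnothard (isHardPair_of_max_eq hcomp htight hc)
  exact dicolourable_two_of_admissible h₀ h₁

/-- **Lemma (bidirected complete graphs).** Let `(D,F=(f₁,f₂))` be a valid tight non-hard pair
with `D` a bidirected complete graph. Then `D` is `F`-dicolourable. -/
theorem bidirectedComplete_dicolourable
    (D : Digraph') (F : Fin 2 → ℕ → ℕ × ℕ)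
    (hvalid : D.ValidPair 2 F) (htight : D.Tight 2 F)
    (hnothard : ¬ IsHardPair 2 D F)
    (hcomp : D.BidirectedComplete) :
    D.Dicolourable 2 F :=
  bidirectedComplete_dicolourable_general D F htight hnothard hcomp
end
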